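/- arXiv:2510.04836 — 3 statements merged into one kernel-verified Lean document; each statement's English description precedes it below -/
import Mathlib

section
/- Let A be a unital C*-algebra and let x, y ∈ A be self-adjoint. Then the Hausdorff distance between σ(x) and σ(y) (viewed as nonempty compact subsets of ℝ, or equivalently of ℂ) is at most ‖x − y‖. -/
/-!
A point `λ` with `λ - y` invertible stays in the resolvent set of `x` as long as
`‖x - y‖ < ‖(λ - y)⁻¹‖⁻¹` (Neumann series), so every `λ ∈ σ(x)` satisfies
`‖(λ - y)⁻¹‖⁻¹ ≤ ‖x - y‖`. For self-adjoint `y` the continuous functional calculus computes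
`‖(λ - y)⁻¹‖` as `sup_{t ∈ σ(y)} |λ - t|⁻¹ = dist(λ, σ(y))⁻¹`, hence `dist(λ, σ(y)) ≤ ‖x - y‖`;
by symmetry this bounds the Hausdorff distance.
-/

open Metric

theorem spectrum.inv_norm_resolvent_le_norm_sub {𝕜 A : Type*} [NormedField 𝕜] [NormedRing A]
    [NormedAlgebra 𝕜 A] [HasSummableGeomSeries A] {x : A} (y : A) {l : 𝕜}
    (hl : l ∈ spectrum 𝕜 x) : ‖resolvent y l‖⁻¹ ≤ ‖x - y‖ := by
  by_contra! hlt
  by_cases hly : l ∈ spectrum 𝕜 y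
  · rw [resolvent_zero_of_mem_spectrum hly, norm_zero, inv_zero] at hlt
    exact (norm_nonneg _).not_gt hlt
  obtain ⟨u, hu⟩ := spectrum.notMem_iff.mp hly
  have hclose : ‖(algebraMap 𝕜 A l - x) - u‖ < ‖(↑u⁻¹ : A)‖⁻¹ := by
    rw [hu, sub_sub_sub_cancel_left, norm_sub_rev, ← Ring.inverse_unit, hu]
    exact hlt
  exact hl (u.ofNearby _ hclose).isUnit

theorem IsSelfAdjoint.infDist_spectrum_le_inv_norm_resolvent {A : Type*} [NormedRing A]
    [StarRing A] [NormedAlgebra ℝ A] [IsometricContinuousFunctionalCalculus ℝ A IsSelfAdjoint]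
    {y : A} (hy : IsSelfAdjoint y) (l : ℝ) :
    infDist l (spectrum ℝ y) ≤ ‖resolvent y l‖⁻¹ := by
  nontriviality A
  by_cases hly : l ∈ spectrum ℝ y
  · rw [infDist_zero_of_mem hly]
    positivity
  have hd : 0 < infDist l (spectrum ℝ y) :=
    ((ContinuousFunctionalCalculus.isCompact_spectrum y).isClosed.notMem_iff_infDist_pos
      (ContinuousFunctionalCalculus.spectrum_nonempty y hy)).mp hly
  have hres : resolvent y l = cfc (fun t => (l - t)⁻¹) y := by
    rw [cfc_inv (fun t => l - t) y fun t ht h => hly (sub_eq_zero.mp h ▸ ht), cfc_sub ..,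
      cfc_const l y, cfc_id' ℝ y, resolvent]
  have hle : ‖resolvent y l‖ ≤ (infDist l (spectrum ℝ y))⁻¹ := by
    refine hres ▸ norm_cfc_le (by positivity) fun t ht => ?_
    rw [norm_inv, ← dist_eq_norm]
    exact inv_anti₀ hd (infDist_le_dist_of_mem ht)
  have hne : resolvent y l ≠ 0 := (spectrum.isUnit_resolvent.mp (Set.not_notMem.mp hly)).ne_zero
  exact (le_inv_comm₀ (norm_pos_iff.mpr hne) hd).mp hle

theorem hausdorffDist_spectrum_le_norm_sub_general
    {A : Type*} [NormedRing A] [StarRing A] [CStarRing A] [CompleteSpace A]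
    [NormedAlgebra ℂ A] [StarModule ℂ A]
    (x y : A) (hx : IsSelfAdjoint x) (hy : IsSelfAdjoint y) :
    Metric.hausdorffDist (spectrum ℝ x) (spectrum ℝ y) ≤ ‖x - y‖ := by
  -- bundling the hypotheses makes the real continuous functional calculus available
  let _ : CStarAlgebra A := {}
  refine hausdorffDist_le_of_infDist (norm_nonneg _) (fun l hl => ?_) fun l hl => ?_
  · exact (hy.infDist_spectrum_le_inv_norm_resolvent l).trans
      (spectrum.inv_norm_resolvent_le_norm_sub y hl)
  · rw [norm_sub_rev]
    exact (hx.infDist_spectrum_le_inv_norm_resolvent l).trans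
      (spectrum.inv_norm_resolvent_le_norm_sub x hl)

/-- For self-adjoint elements `x, y` of a unital C*-algebra, the Hausdorff
distance between their (real) spectra is at most `‖x - y‖`. -/
theorem hausdorffDist_spectrum_le_norm_sub
    {A : Type*} [NormedRing A] [StarRing A] [CStarRing A] [CompleteSpace A]
    [NormedAlgebra ℂ A] [StarModule ℂ A] [Nontrivial A]
    (x y : A) (hx : IsSelfAdjoint x) (hy : IsSelfAdjoint y) :
    Metric.hausdorffDist (spectrum ℝ x) (spectrum ℝ y) ≤ ‖x - y‖ :=
  hausdorffDist_spectrum_le_norm_sub_general x y hx hy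
end

section
/- Let A be a unital C*-algebra and let τ be a tracial state on A. Let r > 0, let (x_n) be a sequence of self-adjoint elements of A and x ∈ A self-adjoint with ‖x_n‖ ≤ r for all n, ‖x‖ ≤ r, and τ((x_n − x)*(x_n − x)) → 0. Then for every continuous function f : ℝ → ℝ, τ(cfc f x_n) → τ(cfc f x) as n → ∞, where cfc f a denotes the continuous functional calculus of f applied to the self-adjoint element a. -/
/-! The positive functional `τ` makes `A` a semi-inner product space (its GNS space) with
`⟪a, b⟫ = τ (star a * b)`, whose norm is the 2-norm of the hypothesis. Left multiplication by
`a` is bounded by `‖a‖` in the 2-norm, and traciality gives `‖star a‖₂ = ‖a‖₂`, so right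
multiplication is bounded as well. Hence multiplication is 2-norm continuous on norm-bounded
sets, so `p (x n) → p xlim` in the 2-norm for every polynomial `p`. By Weierstrass, `cfc f` is a
limit of polynomials uniformly on self-adjoint elements of norm at most `r`, and Moore–Osgood
upgrades this to `cfc f (x n) → cfc f xlim` in the 2-norm. Finally `τ a = ⟪1, a⟫` is 2-norm
continuous. -/

open Filter Set Topology Polynomial
open scoped ComplexOrder InnerProductSpace

lemma spectrum_subset_Icc_of_norm_le {A : Type*} [CStarAlgebra A] {a : A} {r : ℝ}
    (har : ‖a‖ ≤ r) : spectrum ℝ a ⊆ Icc (-r) r := by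
  nontriviality A
  intro t ht
  exact abs_le.mp ((spectrum.norm_le_norm_of_mem ht).trans har)

lemma norm_cfc_sub_aeval_le {A : Type*} [CStarAlgebra A] {f : ℝ → ℝ} {p : ℝ[X]} {a : A}
    {ε : ℝ} (hε : 0 ≤ ε) (ha : IsSelfAdjoint a) (hf : ContinuousOn f (spectrum ℝ a))
    (hp : ∀ t ∈ spectrum ℝ a, |f t - p.eval t| ≤ ε) :
    ‖cfc f a - aeval a p‖ ≤ ε := by
  rw [← cfc_polynomial p a, ← cfc_sub f (fun t => p.eval t) a hf p.continuous.continuousOn]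
  exact norm_cfc_le hε hp

lemma exists_seq_polynomial_tendstoUniformlyOn {f : ℝ → ℝ} {a b : ℝ}
    (hf : ContinuousOn f (Icc a b)) :
    ∃ p : ℕ → ℝ[X], TendstoUniformlyOn (fun k t => (p k).eval t) f atTop (Icc a b) := by
  choose p hp using fun k : ℕ =>
    exists_polynomial_near_of_continuousOn a b f hf (1 / (k + 1)) Nat.one_div_pos_of_nat
  refine ⟨p, Metric.tendstoUniformlyOn_iff.mpr fun ε hε => ?_⟩
  obtain ⟨N, hN⟩ := exists_nat_one_div_lt hε
  filter_upwards [eventually_ge_atTop N] with k hk t ht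
  rw [Real.dist_eq, abs_sub_comm]
  refine (hp k t ht).trans (lt_of_le_of_lt ?_ hN)
  gcongr

lemma tendstoUniformlyOn_aeval_cfc {A : Type*} [CStarAlgebra A] {f : ℝ → ℝ} {r : ℝ}
    (hf : ContinuousOn f (Icc (-r) r)) {p : ℕ → ℝ[X]}
    (hp : TendstoUniformlyOn (fun k t => (p k).eval t) f atTop (Icc (-r) r)) :
    TendstoUniformlyOn (fun k (a : A) => aeval a (p k)) (cfc f) atTop
      {a | IsSelfAdjoint a ∧ ‖a‖ ≤ r} := by
  rw [Metric.tendstoUniformlyOn_iff] at hp ⊢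
  intro ε hε
  filter_upwards [hp (ε / 2) (half_pos hε)] with k hk a ⟨ha, har⟩
  have hσ := spectrum_subset_Icc_of_norm_le har
  rw [dist_eq_norm]
  refine (norm_cfc_sub_aeval_le (half_pos hε).le ha (hf.mono hσ) fun t ht => ?_).trans_lt
    (half_lt_self hε)
  rw [← Real.dist_eq]
  exact (hk t (hσ ht)).le

def PositiveLinearMap.ofStarMulSelfNonneg {A E : Type*} [NonUnitalCStarAlgebra A]
    [PartialOrder A] [StarOrderedRing A] [AddCommGroup E] [PartialOrder E] [IsOrderedAddMonoid E]
    [Module ℂ E] (τ : A →ₗ[ℂ] E) (hτ : ∀ a, 0 ≤ τ (star a * a)) : A →ₚ[ℂ] E :=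
  PositiveLinearMap.mk₀ τ fun _ ha => by
    obtain ⟨b, rfl⟩ := CStarAlgebra.nonneg_iff_eq_star_mul_self.mp ha
    exact hτ b

namespace PositiveLinearMap

variable {A : Type*} [CStarAlgebra A] [PartialOrder A] [StarOrderedRing A] (f : A →ₚ[ℂ] ℂ)

lemma norm_toPreGNS_mul_le (a b : A) :
    ‖f.toPreGNS (a * b)‖ ≤ ‖a‖ * ‖f.toPreGNS b‖ := by
  have h : ‖f.leftMulMapPreGNS a‖ ≤ max ‖a‖ 0 := LinearMap.mkContinuous_norm_le' _ _
  rw [max_eq_left (norm_nonneg a)] at h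
  calc ‖f.toPreGNS (a * b)‖ = ‖f.leftMulMapPreGNS a (f.toPreGNS b)‖ := rfl
    _ ≤ ‖a‖ * ‖f.toPreGNS b‖ := (ContinuousLinearMap.le_opNorm _ _).trans (by gcongr)

lemma uniformContinuous_toPreGNS : UniformContinuous f.toPreGNS :=
  (AddMonoidHomClass.lipschitz_of_bound f.toPreGNS ‖f.toPreGNS 1‖ fun a => by
    rw [mul_comm]
    simpa using f.norm_toPreGNS_mul_le a 1).uniformContinuous

lemma apply_eq_inner_toPreGNS_one (a : A) : f a = ⟪f.toPreGNS 1, f.toPreGNS a⟫_ℂ := by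
  simp [preGNS_inner_def]

variable {f} {ι : Type*} {l : Filter ι}

lemma tendsto_toPreGNS_of_tendsto_apply_star_mul_self {a : ι → A} {a₀ : A}
    (h : Tendsto (fun i => f (star (a i - a₀) * (a i - a₀))) l (𝓝 0)) :
    Tendsto (fun i => f.toPreGNS (a i)) l (𝓝 (f.toPreGNS a₀)) := by
  rw [tendsto_iff_norm_sub_tendsto_zero]
  simpa [← map_sub, preGNS_norm_def] using ((Complex.continuous_re.tendsto 0).comp h).sqrt

lemma tendsto_apply_of_tendsto_toPreGNS {a : ι → A} {a₀ : A}
    (h : Tendsto (fun i => f.toPreGNS (a i)) l (𝓝 (f.toPreGNS a₀))) :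
    Tendsto (fun i => f (a i)) l (𝓝 (f a₀)) := by
  simpa only [apply_eq_inner_toPreGNS_one] using tendsto_const_nhds.inner h

lemma norm_toPreGNS_star (htr : ∀ a b, f (a * b) = f (b * a)) (a : A) :
    ‖f.toPreGNS (star a)‖ = ‖f.toPreGNS a‖ := by
  simp only [preGNS_norm_def, ofPreGNS_toPreGNS, star_star, htr a]

lemma norm_toPreGNS_mul_le_right (htr : ∀ a b, f (a * b) = f (b * a)) (a b : A) :
    ‖f.toPreGNS (a * b)‖ ≤ ‖b‖ * ‖f.toPreGNS a‖ := by
  rw [← norm_toPreGNS_star htr, star_mul, ← norm_star b, ← norm_toPreGNS_star htr a]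
  exact f.norm_toPreGNS_mul_le _ _

lemma tendsto_toPreGNS_mul (htr : ∀ a b, f (a * b) = f (b * a))
    {a b : ι → A} {a₀ b₀ : A} {C : ℝ} (hC : ∀ i, ‖a i‖ ≤ C)
    (ha : Tendsto (fun i => f.toPreGNS (a i)) l (𝓝 (f.toPreGNS a₀)))
    (hb : Tendsto (fun i => f.toPreGNS (b i)) l (𝓝 (f.toPreGNS b₀))) :
    Tendsto (fun i => f.toPreGNS (a i * b i)) l (𝓝 (f.toPreGNS (a₀ * b₀))) := by
  rw [tendsto_iff_norm_sub_tendsto_zero] at ha hb ⊢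
  refine squeeze_zero (fun _ => norm_nonneg _) (fun i => ?_)
    (by simpa using (hb.const_mul C).add (ha.const_mul ‖b₀‖))
  calc ‖f.toPreGNS (a i * b i) - f.toPreGNS (a₀ * b₀)‖
      = ‖f.toPreGNS (a i * (b i - b₀)) + f.toPreGNS ((a i - a₀) * b₀)‖ := by
        rw [← map_sub, ← map_add]
        congr 2
        noncomm_ring
    _ ≤ ‖a i‖ * ‖f.toPreGNS (b i - b₀)‖ + ‖b₀‖ * ‖f.toPreGNS (a i - a₀)‖ :=
        (norm_add_le _ _).trans
          (add_le_add (f.norm_toPreGNS_mul_le _ _) (norm_toPreGNS_mul_le_right htr _ _))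
    _ ≤ C * ‖f.toPreGNS (b i) - f.toPreGNS b₀‖
          + ‖b₀‖ * ‖f.toPreGNS (a i) - f.toPreGNS a₀‖ := by
        rw [map_sub, map_sub]
        gcongr
        exact hC i

lemma tendsto_toPreGNS_pow (htr : ∀ a b, f (a * b) = f (b * a))
    {a : ι → A} {a₀ : A} {C : ℝ} (hC : ∀ i, ‖a i‖ ≤ C)
    (ha : Tendsto (fun i => f.toPreGNS (a i)) l (𝓝 (f.toPreGNS a₀))) (k : ℕ) :
    Tendsto (fun i => f.toPreGNS (a i ^ k)) l (𝓝 (f.toPreGNS (a₀ ^ k))) := by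
  induction k with
  | zero => simpa using tendsto_const_nhds
  | succ k ih => simpa only [pow_succ'] using tendsto_toPreGNS_mul htr hC ha ih

lemma tendsto_toPreGNS_aeval (htr : ∀ a b, f (a * b) = f (b * a))
    {a : ι → A} {a₀ : A} {C : ℝ} (hC : ∀ i, ‖a i‖ ≤ C)
    (ha : Tendsto (fun i => f.toPreGNS (a i)) l (𝓝 (f.toPreGNS a₀))) (p : ℝ[X]) :
    Tendsto (fun i => f.toPreGNS (aeval (a i) p)) l (𝓝 (f.toPreGNS (aeval a₀ p))) := by
  simp only [aeval_eq_sum_range, map_sum, ← Complex.coe_smul, map_smul]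
  exact tendsto_finsetSum _ fun k _ => (tendsto_toPreGNS_pow htr hC ha k).const_smul _

lemma tendsto_toPreGNS_cfc (htr : ∀ a b, f (a * b) = f (b * a))
    {a : ι → A} {a₀ : A} {r : ℝ} (ha : ∀ i, IsSelfAdjoint (a i)) (har : ∀ i, ‖a i‖ ≤ r)
    (ha₀ : IsSelfAdjoint a₀) (ha₀r : ‖a₀‖ ≤ r)
    (hlim : Tendsto (fun i => f.toPreGNS (a i)) l (𝓝 (f.toPreGNS a₀))) {g : ℝ → ℝ}
    (hg : ContinuousOn g (Icc (-r) r)) :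
    Tendsto (fun i => f.toPreGNS (cfc g (a i))) l (𝓝 (f.toPreGNS (cfc g a₀))) := by
  obtain ⟨p, hp⟩ := exists_seq_polynomial_tendstoUniformlyOn hg
  have hunif := f.uniformContinuous_toPreGNS.comp_tendstoUniformlyOn
    (tendstoUniformlyOn_aeval_cfc (A := A) hg hp)
  refine TendstoUniformly.tendsto_of_eventually_tendsto
    (F := fun k i => f.toPreGNS (aeval (a i) (p k))) ?_
    (Eventually.of_forall fun k => tendsto_toPreGNS_aeval htr har hlim (p k))
    (hunif.tendsto_at ⟨ha₀, ha₀r⟩)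
  exact tendstoUniformlyOn_univ.mp ((hunif.comp a).mono fun i _ => ⟨ha i, har i⟩)

end PositiveLinearMap

theorem tendsto_trace_cfc_of_tendsto_twoNorm_general
    {A : Type*} [CStarAlgebra A]
    (τ : A →ₗ[ℂ] ℂ)
    (hpos : ∀ a : A, 0 ≤ τ (star a * a))
    (htr : ∀ a b : A, τ (a * b) = τ (b * a))
    (r : ℝ)
    (x : ℕ → A) (hx : ∀ n, IsSelfAdjoint (x n)) (hxr : ∀ n, ‖x n‖ ≤ r)
    (xlim : A) (hxlim : IsSelfAdjoint xlim) (hxlimr : ‖xlim‖ ≤ r)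
    (hconv : Tendsto (fun n => τ (star (x n - xlim) * (x n - xlim)))
      atTop (nhds 0))
    (f : ℝ → ℝ) (hf : Continuous f) :
    Tendsto (fun n => τ (cfc f (x n))) atTop (nhds (τ (cfc f xlim))) := by
  let := CStarAlgebra.spectralOrder A
  have := CStarAlgebra.spectralOrderedRing A
  let φ := PositiveLinearMap.ofStarMulSelfNonneg τ hpos
  have hφ : Tendsto (fun n => φ.toPreGNS (x n)) atTop (𝓝 (φ.toPreGNS xlim)) :=
    PositiveLinearMap.tendsto_toPreGNS_of_tendsto_apply_star_mul_self hconv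
  exact PositiveLinearMap.tendsto_apply_of_tendsto_toPreGNS
    (PositiveLinearMap.tendsto_toPreGNS_cfc htr hx hxr hxlim hxlimr hφ hf.continuousOn)

/-- Norm-bounded 2-norm convergence of self-adjoint elements with respect to
a tracial state forces convergence of `τ (f(x n))` to `τ (f(x))` for every
continuous `f : ℝ → ℝ`, via the continuous functional calculus. -/
theorem tendsto_trace_cfc_of_tendsto_twoNorm
    {A : Type*} [CStarAlgebra A]
    (τ : A →ₗ[ℂ] ℂ) (hτ1 : τ 1 = 1)
    (hpos : ∀ a : A, 0 ≤ τ (star a * a))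
    (htr : ∀ a b : A, τ (a * b) = τ (b * a))
    (r : ℝ) (hr : 0 < r)
    (x : ℕ → A) (hx : ∀ n, IsSelfAdjoint (x n)) (hxr : ∀ n, ‖x n‖ ≤ r)
    (xlim : A) (hxlim : IsSelfAdjoint xlim) (hxlimr : ‖xlim‖ ≤ r)
    (hconv : Tendsto (fun n => τ (star (x n - xlim) * (x n - xlim)))
      atTop (nhds 0))
    (f : ℝ → ℝ) (hf : Continuous f) :
    Tendsto (fun n => τ (cfc f (x n))) atTop (nhds (τ (cfc f xlim))) :=
  tendsto_trace_cfc_of_tendsto_twoNorm_general τ hpos htr r x hx hxr xlim hxlim hxlimr hconv f hf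
end

section
/- Let A be a unital C*-algebra and let τ be a tracial state on A. Let x, y ∈ A be self-adjoint and let f : ℝ → ℝ be Lipschitz with constant k ≥ 0 (i.e., |f(s) − f(t)| ≤ k|s − t| for all s, t ∈ ℝ). Then, writing ‖a‖₂ = (Re τ(a*a))^{1/2}, one has ‖cfc f x − cfc f y‖₂ ≤ k·‖x − y‖₂; equivalently, Re τ((cfc f x − cfc f y)*(cfc f x − cfc f y)) ≤ k²·Re τ((x − y)*(x − y)). -/
/-! The pairing `g ⊗ h ↦ τ (g(x) h(y))` is positive on functions of two variables. Interpolating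
`g` and `h` through partitions of unity on the spectra turns `∑ᵢ τ (gᵢ(x) hᵢ(y))` into a
nonnegative combination of traces `τ (ρ(x) σ(y))` of products of positive elements, which are
nonnegative because `τ` is tracial; the interpolants converge, and positive functionals are
continuous. Applied to `k² (s - t)² - (f s - f t)² ≥ 0`, written as a sum of six products, this is
`τ ((f(x) - f(y))²) ≤ k² τ ((x - y)²)`. -/

open scoped ComplexOrder
open Filter Topology Metric

theorem IsCompact.exists_seq_partitionOfUnity_tendstoUniformlyOn {X : Type*} [MetricSpace X]
    {K : Set X} (hK : IsCompact K) :
    ∃ (T : ℕ → Finset X) (ρ : ∀ n, PartitionOfUnity (T n) X K), (∀ n, ↑(T n) ⊆ K) ∧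
      ∀ g : X → ℝ, ContinuousOn g K →
        TendstoUniformlyOn (fun n s => ∑ p : T n, g p * ρ n p s) g atTop K := by
  have hcover (n : ℕ) : ∃ (T : Finset X) (ρ : PartitionOfUnity T X K), ↑T ⊆ K ∧
      ρ.IsSubordinate fun p => ball (p : X) (1 / (n + 1)) := by
    obtain ⟨t, htK, htfin, hKt⟩ := hK.finite_cover_balls (e := 1 / (n + 1)) (by positivity)
    obtain ⟨ρ, hρ⟩ := PartitionOfUnity.exists_isSubordinate hK.isClosed
      (fun p : htfin.toFinset => ball (p : X) (1 / (n + 1))) (fun _ => isOpen_ball)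
      (by simpa [Set.iUnion_subtype] using hKt)
    exact ⟨htfin.toFinset, ρ, by simpa using htK, hρ⟩
  choose T ρ hTK hρ using hcover
  refine ⟨T, ρ, hTK, fun g hg => Metric.tendstoUniformlyOn_iff.2 fun ε hε => ?_⟩
  obtain ⟨δ, hδ, hgδ⟩ := Metric.uniformContinuousOn_iff.1
    (hK.uniformContinuousOn_of_continuous hg) (ε / 2) (half_pos hε)
  filter_upwards [tendsto_one_div_add_atTop_nhds_zero_nat.eventually (gt_mem_nhds hδ)]
    with n hn s hs
  have hmem : ∑ᶠ p, ρ n p s • g p ∈ closedBall (g s) (ε / 2) := by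
    refine (ρ n).finsum_smul_mem_convex hs (g := fun p _ => g p) (fun p hp => ?_)
      (convex_closedBall _ _)
    have hsp : dist s p < 1 / (n + 1) := hρ n p (subset_tsupport _ hp)
    exact mem_closedBall.2 (hgδ p (hTK n p.2) s hs (by rw [dist_comm]; linarith)).le
  rw [finsum_eq_sum_of_fintype, mem_closedBall, dist_comm] at hmem
  simp only [smul_eq_mul, mul_comm (ρ n _ s)] at hmem
  linarith

section

variable {R A : Type*} {p : A → Prop} [CommSemiring R] [StarRing R] [MetricSpace R]
  [IsTopologicalSemiring R] [ContinuousStar R] [TopologicalSpace A] [Ring A] [StarRing A]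
  [Algebra R A] [ContinuousFunctionalCalculus R A p]

lemma cfc_sum_const_mul {ι : Type*} [Fintype ι] (c : ι → R) (φ : ι → R → R) (a : A)
    (hφ : ∀ i, ContinuousOn (φ i) (spectrum R a)) :
    cfc (fun s => ∑ i, c i * φ i s) a = ∑ i, c i • cfc (φ i) a := by
  rw [← Finset.sum_fn, cfc_sum_univ (fun i s => c i * φ i s) a fun i => (hφ i).const_smul (c i)]
  exact Finset.sum_congr rfl fun i _ => cfc_const_mul (c i) (φ i) a

end

namespace LinearMap

variable {A : Type*} [CStarAlgebra A] [PartialOrder A] [StarOrderedRing A] {τ : A →ₗ[ℂ] ℂ}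

lemma map_nonneg_of_star_mul_self_nonneg (hpos : ∀ a, 0 ≤ τ (star a * a)) {a : A} (ha : 0 ≤ a) :
    0 ≤ τ a := by
  obtain ⟨b, rfl⟩ := CStarAlgebra.nonneg_iff_eq_star_mul_self.1 ha
  exact hpos b

lemma continuous_of_star_mul_self_nonneg (hpos : ∀ a, 0 ≤ τ (star a * a)) : Continuous τ :=
  map_continuous (PositiveLinearMap.mk₀ τ fun _ => map_nonneg_of_star_mul_self_nonneg hpos)

lemma map_mul_nonneg_of_tracial (hpos : ∀ a, 0 ≤ τ (star a * a))
    (htr : ∀ a b, τ (a * b) = τ (b * a)) {a b : A} (ha : 0 ≤ a) (hb : 0 ≤ b) :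
    0 ≤ τ (a * b) := by
  have hconj : 0 ≤ CFC.sqrt a * b * CFC.sqrt a :=
    conjugate_nonneg_of_nonneg hb (CFC.sqrt_nonneg a)
  calc 0 ≤ τ (CFC.sqrt a * b * CFC.sqrt a) := map_nonneg_of_star_mul_self_nonneg hpos hconj
    _ = τ (a * b) := by rw [htr, ← mul_assoc, CFC.sqrt_mul_sqrt_self a ha]

theorem sum_smul_map_cfc_mul_cfc_nonneg (hpos : ∀ a, 0 ≤ τ (star a * a))
    (htr : ∀ a b, τ (a * b) = τ (b * a)) (x y : A) {ι : Type*} [Fintype ι] (c : ι → ℝ)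
    (g h : ι → ℝ → ℝ) (hg : ∀ i, ContinuousOn (g i) (spectrum ℝ x))
    (hh : ∀ i, ContinuousOn (h i) (spectrum ℝ y))
    (hgh : ∀ s ∈ spectrum ℝ x, ∀ t ∈ spectrum ℝ y, 0 ≤ ∑ i, c i * (g i s * h i t)) :
    0 ≤ ∑ i, c i • τ (cfc (g i) x * cfc (h i) y) := by
  obtain ⟨S, ρ, hSx, hρ⟩ := (ContinuousFunctionalCalculus.isCompact_spectrum (R := ℝ)
    x).exists_seq_partitionOfUnity_tendstoUniformlyOn
  obtain ⟨T, σ, hTy, hσ⟩ := (ContinuousFunctionalCalculus.isCompact_spectrum (R := ℝ)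
    y).exists_seq_partitionOfUnity_tendstoUniformlyOn
  have hlim : Tendsto (fun n => ∑ i, c i • τ (cfc (fun s => ∑ p : S n, g i p * ρ n p s) x *
      cfc (fun t => ∑ q : T n, h i q * σ n q t) y)) atTop
      (𝓝 (∑ i, c i • τ (cfc (g i) x * cfc (h i) y))) :=
    tendsto_finsetSum _ fun i _ => (((continuous_of_star_mul_self_nonneg hpos).tendsto _).comp <|
      (tendsto_cfc_fun (hρ _ (hg i)) (.of_forall fun n => by fun_prop)).mul
        (tendsto_cfc_fun (hσ _ (hh i)) (.of_forall fun n => by fun_prop))).const_smul (c i)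
  refine ge_of_tendsto' hlim fun n => ?_
  have hexpand : ∑ i, c i • τ (cfc (fun s => ∑ p : S n, g i p * ρ n p s) x *
      cfc (fun t => ∑ q : T n, h i q * σ n q t) y) =
      ∑ p : S n, ∑ q : T n, (∑ i, c i * (g i p * h i q)) • τ (cfc (ρ n p) x * cfc (σ n q) y) := by
    simp only [cfc_sum_const_mul _ _ _ fun p => (ρ n p).continuous.continuousOn,
      cfc_sum_const_mul _ _ _ fun q => (σ n q).continuous.continuousOn, Finset.sum_mul_sum,
      smul_mul_smul_comm, map_sum, LinearMap.map_smul_of_tower, Finset.smul_sum, Finset.sum_smul,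
      mul_smul]
    rw [Finset.sum_comm]
    exact Finset.sum_congr rfl fun p _ => Finset.sum_comm
  rw [hexpand]
  exact Finset.sum_nonneg fun p _ => Finset.sum_nonneg fun q _ =>
    smul_nonneg (hgh p (hSx n p.2) q (hTy n q.2)) (map_mul_nonneg_of_tracial hpos htr
      (cfc_nonneg fun s _ => (ρ n).nonneg p s) (cfc_nonneg fun t _ => (σ n).nonneg q t))

theorem map_mul_self_cfc_sub_cfc_le (hpos : ∀ a, 0 ≤ τ (star a * a))
    (htr : ∀ a b, τ (a * b) = τ (b * a)) {x y : A} (hx : IsSelfAdjoint x) (hy : IsSelfAdjoint y)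
    {f : ℝ → ℝ} {k : ℝ} (hf : ∀ s t, |f s - f t| ≤ k * |s - t|) :
    τ ((cfc f x - cfc f y) * (cfc f x - cfc f y)) ≤ k ^ 2 • τ ((x - y) * (x - y)) := by
  have hfc : Continuous f := (LipschitzWith.of_dist_le' hf).continuous
  have hpair := sum_smul_map_cfc_mul_cfc_nonneg hpos htr x y
    ![k ^ 2, -2 * k ^ 2, k ^ 2, -1, 2, -1]
    ![fun s => s ^ 2, fun s => s, fun _ => 1, fun s => f s ^ 2, f, fun _ => 1]
    ![fun _ => 1, fun t => t, fun t => t ^ 2, fun _ => 1, f, fun t => f t ^ 2]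
    (fun i => by fin_cases i <;> dsimp <;> fun_prop)
    (fun i => by fin_cases i <;> dsimp <;> fun_prop)
    (fun s _ t _ => by
      have hsq : (f s - f t) ^ 2 ≤ (k * (s - t)) ^ 2 :=
        sq_le_sq.2 ((hf s t).trans (by rw [abs_mul]; gcongr; exact le_abs_self k))
      simp only [Fin.sum_univ_six, Matrix.cons_val]
      linear_combination hsq)
  simp only [Fin.sum_univ_six, Matrix.cons_val, cfc_const_one, cfc_pow_id, cfc_id',
    cfc_pow f 2 x, cfc_pow f 2 y, hx, hy] at hpair
  rw [← sub_nonneg]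
  convert hpair using 1
  simp only [sub_mul, mul_sub, map_sub, one_mul, mul_one, sq, Complex.real_smul,
    Complex.ofReal_mul, Complex.ofReal_neg, Complex.ofReal_one, Complex.ofReal_ofNat]
  linear_combination (↑k ^ 2) * htr x y - htr (cfc f x) (cfc f y)

end LinearMap

theorem twoNorm_cfc_sub_cfc_le_lipschitz_mul_twoNorm_general
    {A : Type*} [CStarAlgebra A]
    (τ : A →ₗ[ℂ] ℂ)
    (hpos : ∀ a : A, 0 ≤ τ (star a * a))
    (htr : ∀ a b : A, τ (a * b) = τ (b * a))
    (x y : A) (hx : IsSelfAdjoint x) (hy : IsSelfAdjoint y)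
    (f : ℝ → ℝ) (k : ℝ) (hk : 0 ≤ k)
    (hf : ∀ s t : ℝ, |f s - f t| ≤ k * |s - t|) :
    Real.sqrt ((τ (star (cfc f x - cfc f y) * (cfc f x - cfc f y))).re) ≤
        k * Real.sqrt ((τ (star (x - y) * (x - y))).re) ∧
      (τ (star (cfc f x - cfc f y) * (cfc f x - cfc f y))).re ≤
        k ^ 2 * (τ (star (x - y) * (x - y))).re := by
  let : PartialOrder A := CStarAlgebra.spectralOrder A
  have : StarOrderedRing A := CStarAlgebra.spectralOrderedRing A
  have hsq : (τ (star (cfc f x - cfc f y) * (cfc f x - cfc f y))).re ≤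
      k ^ 2 * (τ (star (x - y) * (x - y))).re := by
    rw [((cfc_predicate f x).sub (cfc_predicate f y)).star_eq, (hx.sub hy).star_eq]
    exact (Complex.le_def.1 (τ.map_mul_self_cfc_sub_cfc_le hpos htr hx hy hf)).1.trans_eq
      (Complex.smul_re _ _)
  refine ⟨(Real.sqrt_le_sqrt hsq).trans_eq ?_, hsq⟩
  rw [Real.sqrt_mul (sq_nonneg k), Real.sqrt_sq hk]

/-- Tracial-state form of Kittaneh's Lipschitz estimate: for a tracial state
`τ` on a unital C*-algebra, self-adjoint `x, y`, and a `k`-Lipschitz function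
`f : ℝ → ℝ`, one has `‖f(x) − f(y)‖₂ ≤ k·‖x − y‖₂`, where
`‖a‖₂ = (Re τ(a*a))^{1/2}`; equivalently, the squared form of the same
inequality. -/
theorem twoNorm_cfc_sub_cfc_le_lipschitz_mul_twoNorm
    {A : Type*} [CStarAlgebra A]
    (τ : A →ₗ[ℂ] ℂ) (hτ1 : τ 1 = 1)
    (hpos : ∀ a : A, 0 ≤ τ (star a * a))
    (htr : ∀ a b : A, τ (a * b) = τ (b * a))
    (x y : A) (hx : IsSelfAdjoint x) (hy : IsSelfAdjoint y)
    (f : ℝ → ℝ) (k : ℝ) (hk : 0 ≤ k)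
    (hf : ∀ s t : ℝ, |f s - f t| ≤ k * |s - t|) :
    Real.sqrt ((τ (star (cfc f x - cfc f y) * (cfc f x - cfc f y))).re) ≤
        k * Real.sqrt ((τ (star (x - y) * (x - y))).re) ∧
      (τ (star (cfc f x - cfc f y) * (cfc f x - cfc f y))).re ≤
        k ^ 2 * (τ (star (x - y) * (x - y))).re :=
  twoNorm_cfc_sub_cfc_le_lipschitz_mul_twoNorm_general τ hpos htr x y hx hy f k hk hf
end
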